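/- Sphere-counting lower bound: Let T̂ be a Cm×Em binary matrix arising from a C×E matrix over F_{2^m} with all C×C submatrices invertible, and let k := pEm < C/2 be an integer. Then the number of distinct matrices of the form T̂Z, as Z ranges over Em×n binary matrices with exactly k ones in each column, is at least binom(Em, k)^n ≥ 2^{H(p)·Emn - n·log₂(Em+1)}. -/

import Mathlib

/-!
Every `C × C` submatrix of `A` being invertible, a nonzero vector in the kernel of `A` has more
than `C` nonzero entries; the same holds for the binary image `T̂`, because a nonzero block of
`m` binary coordinates comes from a nonzero entry over `𝔽_{2^m}`. Two binary columns of weight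
`k` differ in at most `2k < C` places, so `Z ↦ T̂ Z` is injective on the `binom(Em, k) ^ n`
matrices with columns of weight `k`. The entropy bound is the classical
`binom(N, k) ≥ 2 ^ (N H(k/N)) / (N + 1)`: the term `binom(N, k) k^k (N - k)^(N - k)` is the
largest of the `N + 1` terms of the binomial expansion of `N ^ N = (k + (N - k)) ^ N`.
-/

open Finset

/-- The binary entropy function (base-2 logarithms). -/
noncomputable def binH (q : ℝ) : ℝ := -q * Real.logb 2 q - (1 - q) * Real.logb 2 (1 - q)

open scoped Matrix

namespace Nat

theorem choose_succ_mul_pow_mul_pow_mul (N k : ℕ) {i : ℕ} (hi : i < N) :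
    N.choose (i + 1) * k ^ (i + 1) * (N - k) ^ (N - (i + 1)) * ((i + 1) * (N - k)) =
      N.choose i * k ^ i * (N - k) ^ (N - i) * ((N - i) * k) := by
  obtain ⟨j, rfl⟩ : ∃ j, N = i + 1 + j := ⟨N - (i + 1), by omega⟩
  have hchoose := choose_succ_right_eq (i + 1 + j) i
  rw [show i + 1 + j - (i + 1) = j by omega, show i + 1 + j - i = j + 1 by omega] at *
  calc _ = (i + 1 + j).choose (i + 1) * (i + 1) * (k ^ (i + 1) * (i + 1 + j - k) ^ (j + 1)) := by
        ring
    _ = _ := by rw [hchoose]; ring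

theorem choose_mul_pow_mul_pow_le (N : ℕ) {k : ℕ} (hk : k ≤ N) (i : ℕ) :
    N.choose i * k ^ i * (N - k) ^ (N - i) ≤ N.choose k * k ^ k * (N - k) ^ (N - k) := by
  set t : ℕ → ℕ := fun i ↦ N.choose i * k ^ i * (N - k) ^ (N - i)
  have ratio := fun i (hi : i < N) ↦ choose_succ_mul_pow_mul_pow_mul N k hi
  have up : ∀ i < k, t i ≤ t (i + 1) := by
    intro i hi
    have hle : (i + 1) * (N - k) ≤ (N - i) * k := by zify [hk, (by omega : i ≤ N)]; nlinarith
    refine le_of_mul_le_mul_right ?_ (Nat.mul_pos (by omega) (by omega) : 0 < (N - i) * k)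
    calc t i * ((N - i) * k) = t (i + 1) * ((i + 1) * (N - k)) := (ratio i (by omega)).symm
      _ ≤ t (i + 1) * ((N - i) * k) := Nat.mul_le_mul_left _ hle
  have down : ∀ i ≥ k, t (i + 1) ≤ t i := by
    intro i hi
    rcases lt_or_ge i N with hiN | hiN
    · have hle : (N - i) * k ≤ (i + 1) * (N - k) := by zify [hk, hiN.le]; nlinarith
      refine le_of_mul_le_mul_right ?_ (Nat.mul_pos (by omega) (by omega) : 0 < (i + 1) * (N - k))
      calc t (i + 1) * ((i + 1) * (N - k)) = t i * ((N - i) * k) := ratio i hiN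
        _ ≤ t i * ((i + 1) * (N - k)) := Nat.mul_le_mul_left _ hle
    · simp [t, choose_eq_zero_of_lt (show N < i + 1 by omega)]
  rcases le_total i k with hik | hki
  · exact decreasingInduction (motive := fun j _ ↦ t j ≤ t k)
      (fun j hj ih ↦ (up j hj).trans ih) le_rfl hik
  · exact antitoneOn_nat_Ici_of_succ_le down (le_refl k) hki hki

theorem pow_self_le_succ_mul_choose_mul_pow_mul_pow (N : ℕ) {k : ℕ} (hk : k ≤ N) :
    N ^ N ≤ (N + 1) * (N.choose k * k ^ k * (N - k) ^ (N - k)) := by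
  calc N ^ N = (k + (N - k)) ^ N := by rw [Nat.add_sub_cancel' hk]
    _ = ∑ i ∈ range (N + 1), k ^ i * (N - k) ^ (N - i) * N.choose i := add_pow _ _ _
    _ ≤ ∑ _i ∈ range (N + 1), N.choose k * k ^ k * (N - k) ^ (N - k) :=
        sum_le_sum fun i _ ↦ by rw [mul_comm, ← mul_assoc]; exact choose_mul_pow_mul_pow_le N hk i
    _ = _ := by simp

end Nat

open Real

theorem two_rpow_mul_logb_self (x : ℕ) : (2 : ℝ) ^ ((x : ℝ) * logb 2 x) = (x : ℝ) ^ x := by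
  obtain rfl | hx := x.eq_zero_or_pos
  · simp
  rw [mul_comm, rpow_mul zero_le_two, rpow_logb two_pos (by norm_num) (by positivity),
    rpow_natCast]

theorem binH_div_mul (a : ℝ) {N : ℝ} (hN : N ≠ 0) :
    binH (a / N) * N = N * logb 2 N - a * logb 2 a - (N - a) * logb 2 (N - a) := by
  have mul_logb_div : ∀ b, b / N * logb 2 (b / N) * N = b * logb 2 b - b * logb 2 N := by
    intro b
    obtain rfl | hb := eq_or_ne b 0
    · simp
    rw [logb_div hb hN]
    field_simp
  have hsub : 1 - a / N = (N - a) / N := by field_simp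
  simp only [binH, hsub, neg_mul, sub_mul, mul_logb_div]
  ring

theorem two_rpow_binH_mul_sub_logb_le_choose (N : ℕ) {k : ℕ} (hk : k ≤ N) :
    (2 : ℝ) ^ (binH (k / N) * N - logb 2 (N + 1)) ≤ N.choose k := by
  obtain rfl | hN := N.eq_zero_or_pos
  · obtain rfl : k = 0 := by omega
    simp
  have hcast : (N : ℝ) - k = (N - k : ℕ) := by rw [Nat.cast_sub hk]
  have hpos : ∀ x : ℕ, (0 : ℝ) < (x : ℝ) ^ x := fun x ↦ by exact_mod_cast Nat.pow_self_pos
  rw [binH_div_mul _ (by positivity), hcast, rpow_sub two_pos, rpow_sub two_pos, rpow_sub two_pos,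
    two_rpow_mul_logb_self, two_rpow_mul_logb_self, two_rpow_mul_logb_self,
    rpow_logb two_pos (by norm_num) (by positivity), div_le_iff₀ (by positivity),
    div_le_iff₀ (hpos _), div_le_iff₀ (hpos _)]
  exact_mod_cast (Nat.pow_self_le_succ_mul_choose_mul_pow_mul_pow N hk).trans_eq (by ring)

namespace Matrix

variable {R κ ι ν F L μ : Type*}

theorem eq_zero_of_mulVec_eq_zero_of_hammingNorm_le [Semiring R] [DecidableEq R] [Fintype ι]
    [Fintype κ] [DecidableEq κ] {A : Matrix κ ι R}
    (hA : ∀ f : κ → ι, Function.Injective f → IsUnit (A.submatrix id f))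
    (hcard : Fintype.card κ ≤ Fintype.card ι) {x : ι → R}
    (hx : hammingNorm x ≤ Fintype.card κ) (hAx : A *ᵥ x = 0) : x = 0 := by
  classical
  obtain ⟨t, hsupp, ht⟩ := exists_superset_card_eq hx (by simpa using hcard)
  let e : κ ≃ t := Fintype.equivOfCardEq (by simp [ht])
  let f : κ → ι := (↑) ∘ e
  have hxt : ∀ i ∉ t, x i = 0 := fun i hi ↦ by
    by_contra h
    exact hi (hsupp (by simpa using h))
  have hsub : A.submatrix id f *ᵥ (x ∘ f) = A *ᵥ x := by
    ext q
    simp only [mulVec, dotProduct, submatrix_apply, id, Function.comp_apply, f]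
    rw [e.sum_comp (fun i : t ↦ A q i * x i), sum_coe_sort t (fun i ↦ A q i * x i)]
    exact sum_subset (subset_univ t) fun i _ hi ↦ by rw [hxt i hi, mul_zero]
  have hxf : x ∘ f = 0 :=
    mulVec_injective_of_isUnit (hA f (Subtype.val_injective.comp e.injective))
      (by rw [hsub, hAx, mulVec_zero])
  ext i
  by_cases hi : i ∈ t
  · simpa [f] using congrFun hxf (e.symm ⟨i, hi⟩)
  · exact hxt i hi

theorem injOn_mul_of_hammingNorm_le [Ring R] [DecidableEq R] [Fintype ι] (M : Matrix κ ι R) {k : ℕ}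
    (hM : ∀ x : ι → R, hammingNorm x ≤ 2 * k → M *ᵥ x = 0 → x = 0) :
    Set.InjOn (M * ·) {Z : Matrix ι ν R | ∀ j, hammingNorm (Zᵀ j) ≤ k} := by
  intro Z hZ Z' hZ' h
  ext i j
  have hcol : M *ᵥ (Zᵀ j - Z'ᵀ j) = 0 := by
    rw [mulVec_sub, sub_eq_zero]
    exact funext fun q ↦ congrFun (congrFun h q) j
  have hweight : hammingNorm (Zᵀ j - Z'ᵀ j) ≤ 2 * k := calc
    hammingNorm (Zᵀ j - Z'ᵀ j) = hammingDist (Zᵀ j) (Z'ᵀ j) := by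
      simp only [hammingNorm, hammingDist, Pi.sub_apply, sub_ne_zero]
    _ ≤ hammingNorm (Zᵀ j) + hammingNorm (Z'ᵀ j) := by
      simpa [hammingDist_comm 0] using hammingDist_triangle (Zᵀ j) 0 (Z'ᵀ j)
    _ ≤ 2 * k := by linarith [hZ j, hZ' j]
  exact sub_eq_zero.mp (congrFun (hM _ hweight hcol) i)

/-- The matrix over `F` of `x ↦ A *ᵥ x` on `ι → L`, in the coordinates `β : L ≃ (μ → F)`. -/
def coordExpansion [DecidableEq μ] [CommSemiring F] [Semiring L] [Algebra F L]
    (β : L ≃ₗ[F] (μ → F)) (A : Matrix κ ι L) : Matrix (κ × μ) (ι × μ) F :=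
  of fun q r ↦ β (A q.1 r.1 * β.symm (Pi.single r.2 1)) q.2

theorem coordExpansion_mulVec [Fintype ι] [Fintype μ] [DecidableEq μ] [CommSemiring F]
    [Semiring L] [Algebra F L] (β : L ≃ₗ[F] (μ → F)) (A : Matrix κ ι L) (x : ι → L) :
    coordExpansion β A *ᵥ (fun r ↦ β (x r.1) r.2) = fun q ↦ β ((A *ᵥ x) q.1) q.2 := by
  ext ⟨q, s⟩
  have hx : ∀ r, x r = ∑ t, β (x r) t • β.symm (Pi.single t 1) := fun r ↦ by
    simp only [← map_smul, ← map_sum, ← pi_eq_sum_univ', LinearEquiv.symm_apply_apply]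
  simp only [mulVec, dotProduct, coordExpansion, of_apply, Fintype.sum_prod_type]
  conv_rhs => rw [map_sum]; enter [2, r]; rw [hx r, mul_sum]
  simp [map_sum, mul_comm]

theorem eq_zero_of_coordExpansion_mulVec_eq_zero_of_hammingNorm_le [Fintype ι] [Fintype μ]
    [DecidableEq μ] [Fintype κ] [DecidableEq κ] [CommSemiring F] [DecidableEq F] [Semiring L]
    [Algebra F L] {β : L ≃ₗ[F] (μ → F)} {A : Matrix κ ι L}
    (hA : ∀ f : κ → ι, Function.Injective f → IsUnit (A.submatrix id f))
    (hcard : Fintype.card κ ≤ Fintype.card ι) {X : ι × μ → F}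
    (hX : hammingNorm X ≤ Fintype.card κ) (h : coordExpansion β A *ᵥ X = 0) : X = 0 := by
  classical
  set x : ι → L := fun r ↦ β.symm (Function.curry X r)
  have hXx : X = fun r ↦ β (x r.1) r.2 := by ext ⟨r, t⟩; simp [x]
  have hx : hammingNorm x ≤ hammingNorm X := calc
    #{r | x r ≠ 0} ≤ #((univ.filter fun i ↦ X i ≠ 0).image Prod.fst) := card_le_card fun r hr ↦ by
      obtain ⟨t, ht⟩ : ∃ t, X (r, t) ≠ 0 := by
        by_contra! hr0
        simp [x, show Function.curry X r = 0 from funext hr0] at hr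
      exact mem_image.mpr ⟨(r, t), by simpa using ht, rfl⟩
    _ ≤ #{i | X i ≠ 0} := card_image_le
  have hAx : A *ᵥ x = 0 := by
    rw [hXx, coordExpansion_mulVec] at h
    ext q
    exact β.map_eq_zero_iff.mp (funext fun s ↦ congrFun h (q, s))
  rw [hXx, eq_zero_of_mulVec_eq_zero_of_hammingNorm_le hA hcard (hx.trans hX) hAx]
  ext
  simp

end Matrix

theorem ZMod.hammingNorm_eq_card_filter_eq_one {ι : Type*} [Fintype ι] (x : ι → ZMod 2) :
    hammingNorm x = #{i | x i = 1} :=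
  congrArg Finset.card (filter_congr fun i _ ↦
    (by decide : ∀ a : ZMod 2, a ≠ 0 ↔ a = 1) (x i))

theorem ZMod.ncard_setOf_forall_hammingNorm_transpose_eq (α β : Type*) [Fintype α] [DecidableEq α]
    [Fintype β] (k : ℕ) :
    {Z : Matrix α β (ZMod 2) | ∀ j, hammingNorm (Zᵀ j) = k}.ncard =
      (Fintype.card α).choose k ^ Fintype.card β := by
  let e : {Z : Matrix α β (ZMod 2) | ∀ j, hammingNorm (Zᵀ j) = k} ≃
      (β → {s : Finset α // #s = k}) :=
    { toFun Z j := ⟨({i | Z.1 i j ≠ 0} : Finset α), Z.2 j⟩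
      invFun F := ⟨.of fun i j ↦ if i ∈ (F j).1 then 1 else 0,
        fun j ↦ by simp [hammingNorm, (F j).2]⟩
      left_inv Z := by
        ext i j
        simp only [Matrix.of_apply, mem_filter, mem_univ, true_and]
        exact (by decide : ∀ a : ZMod 2, (if a ≠ 0 then 1 else 0) = a) _
      right_inv F := by ext j i; simp }
  rw [← Nat.card_coe_set_eq, Nat.card_congr e, Nat.card_fun, Nat.card_eq_fintype_card,
    Fintype.card_finset_len, Nat.card_eq_fintype_card]

theorem sphere_counting_lower_bound_general (C E m n k : ℕ)
    (hm : 0 < m) (hCE : C ≤ E) (hk : 2 * k < C)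
    (p : ℝ) (hp : p = (k : ℝ) / ((E : ℝ) * m))
    (A : Matrix (Fin C) (Fin E) (GaloisField 2 m))
    (hA : ∀ f : Fin C → Fin E, Function.Injective f → IsUnit (A.submatrix id f))
    (β : GaloisField 2 m ≃ₗ[ZMod 2] (Fin m → ZMod 2))
    (That : Matrix (Fin C × Fin m) (Fin E × Fin m) (ZMod 2))
    (hThat : That = fun q r => β (A q.1 r.1 * β.symm (Pi.single r.2 1)) q.2)
    (S : Set (Matrix (Fin E × Fin m) (Fin n) (ZMod 2)))
    (hS : S = {Z | ∀ j : Fin n,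
      (Finset.univ.filter fun i : Fin E × Fin m => Z i j = 1).card = k}) :
    Nat.choose (E * m) k ^ n ≤ ((fun Z => That * Z) '' S).ncard ∧
    (2 : ℝ) ^ (binH p * ((E : ℝ) * m * n) - (n : ℝ) * Real.logb 2 ((E : ℝ) * m + 1)) ≤
      ((Nat.choose (E * m) k : ℝ)) ^ n := by
  have hS' : S = {Z | ∀ j, hammingNorm (Zᵀ j) = k} := by
    simp only [hS, ZMod.hammingNorm_eq_card_filter_eq_one]
    rfl
  have hdecode : Set.InjOn (That * ·) {Z : Matrix _ (Fin n) _ | ∀ j, hammingNorm (Zᵀ j) ≤ k} :=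
    That.injOn_mul_of_hammingNorm_le fun X hX hTX ↦
      Matrix.eq_zero_of_coordExpansion_mulVec_eq_zero_of_hammingNorm_le hA
        (by simpa using hCE) (by simpa using hX.trans hk.le) (hThat ▸ hTX)
  have hinj : Set.InjOn (That * ·) S := hdecode.mono fun Z hZ ↦ by
    rw [hS'] at hZ
    exact fun j ↦ (hZ j).le
  have hkN : k ≤ E * m := by nlinarith
  constructor
  · rw [hinj.ncard_image, hS', ZMod.ncard_setOf_forall_hammingNorm_transpose_eq]
    simp
  · have hchoose := two_rpow_binH_mul_sub_logb_le_choose (E * m) hkN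
    push_cast at hchoose
    rw [← hp] at hchoose
    calc (2 : ℝ) ^ (binH p * (E * m * n) - n * logb 2 (E * m + 1))
        = ((2 : ℝ) ^ (binH p * (E * m) - logb 2 (E * m + 1))) ^ n := by
          rw [← rpow_natCast, ← rpow_mul zero_le_two]
          ring_nf
      _ ≤ _ := pow_le_pow_left₀ (by positivity) hchoose n

/-- Sphere-counting lower bound: with `That` the `Cm×Em` binary expansion of a `C×E`
matrix over `F_{2^m}` whose every `C×C` submatrix is invertible, and `k = pEm < C/2`,
the number of distinct matrices `That·Z`, as `Z` ranges over `Em×n` binary matrices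
with exactly `k` ones per column, is at least `binom(Em,k)^n ≥ 2^{H(p)Emn − n·log₂(Em+1)}`. -/
theorem sphere_counting_lower_bound (C E m n k : ℕ) (hC : 0 < C) (hE : 0 < E)
    (hm : 0 < m) (hn : 0 < n) (hCE : C ≤ E) (hk : 2 * k < C)
    (p : ℝ) (hp : p = (k : ℝ) / ((E : ℝ) * m))
    (A : Matrix (Fin C) (Fin E) (GaloisField 2 m))
    (hA : ∀ f : Fin C → Fin E, Function.Injective f → IsUnit (A.submatrix id f))
    (β : GaloisField 2 m ≃ₗ[ZMod 2] (Fin m → ZMod 2))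
    (That : Matrix (Fin C × Fin m) (Fin E × Fin m) (ZMod 2))
    (hThat : That = fun q r => β (A q.1 r.1 * β.symm (Pi.single r.2 1)) q.2)
    (S : Set (Matrix (Fin E × Fin m) (Fin n) (ZMod 2)))
    (hS : S = {Z | ∀ j : Fin n,
      (Finset.univ.filter fun i : Fin E × Fin m => Z i j = 1).card = k}) :
    Nat.choose (E * m) k ^ n ≤ ((fun Z => That * Z) '' S).ncard ∧
    (2 : ℝ) ^ (binH p * ((E : ℝ) * m * n) - (n : ℝ) * Real.logb 2 ((E : ℝ) * m + 1)) ≤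
      ((Nat.choose (E * m) k : ℝ)) ^ n :=
  sphere_counting_lower_bound_general C E m n k hm hCE hk p hp A hA β That hThat S hS
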